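/- arXiv:1501.05363 — 6 statements merged into one kernel-verified Lean document; each statement's English description precedes it below -/
import Mathlib

section
/- Let A be commutative, E a symmetric bi-Hilbertian A-bimodule (a·e = e·a for all a, e) with _A⟨e|f⟩ = ⟨f|e⟩_A. Then the map Φ on finite-rank operators given by Φ(Θ_{e,f}) = _A⟨e|f⟩ is a trace: Φ(Θ_{e,f}Θ_{g,h}) = Φ(Θ_{g,h}Θ_{e,f}) for all e, f, g, h ∈ E. -/
/- STATEMENT 3: For a symmetric bi-Hilbertian bimodule E over a commutative unital
C*-algebra A (a·e = e·a, and _A⟨e|f⟩ = ⟨f|e⟩_A), the map Φ(Θ_{e,f}) = _A⟨e|f⟩ is a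
trace: Φ(Θ_{e,f}Θ_{g,h}) = Φ(Θ_{g,h}Θ_{e,f}).  Using the composition rule
Θ_{e,f}Θ_{g,h} = Θ_{e·⟨f|g⟩_A, h}, this reads
_A⟨e·⟨f|g⟩_A | h⟩ = _A⟨g·⟨h|e⟩_A | f⟩. -/
theorem statement3
    {A E : Type*}
    [NormedCommRing A] [StarRing A] [CStarRing A] [NormedAlgebra ℂ A] [CompleteSpace A]
    [AddCommGroup E] [Module ℂ E]
    (rip : E → E → A)            -- right A-valued inner product ⟨·|·⟩_A
    (lip : E → E → A)            -- left A-valued inner product _A⟨·|·⟩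
    (rsmul : E → A → E)          -- right action of A on E
    -- right inner product axioms used
    (hrip_linear : ∀ e f (a : A), rip e (rsmul f a) = rip e f * a)
    (hrip_star : ∀ e f, star (rip e f) = rip f e)
    -- the symmetry hypothesis: _A⟨e|f⟩ = ⟨f|e⟩_A
    (hsymm : ∀ e f, lip e f = rip f e) :
    ∀ e f g h : E,
      lip (rsmul e (rip f g)) h = lip (rsmul g (rip h e)) f := by
  intro e f g h
  rw [hsymm, hsymm, hrip_linear, hrip_linear, mul_comm]
end

section
/- Let G be a topological graph with G^0, G^1 compact and r, s local homeomorphisms. For m, n ∈ ℕ let G^1_{m,n} = {e ∈ G^1 : |r^{-1}(r(e))| = m and |s^{-1}(s(e))| = n}. Then each G^1_{m,n} is compact open, and s(G^1_{m,n}) and r(G^1_{m,n}) are compact open subsets of G^0. -/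
open Set

/-- Fibers of a local homeomorphism from a compact space are finite. -/
lemma aux_fiber_finite {G0 G1 : Type*} [TopologicalSpace G0] [TopologicalSpace G1]
    [CompactSpace G1] [T2Space G0] {s : G1 → G0} (hs : IsLocalHomeomorph s) (v : G0) :
    (s ⁻¹' {v}).Finite := by
  have hc : IsCompact (s ⁻¹' {v}) :=
    (isClosed_singleton.preimage hs.continuous).isCompact
  choose e hmem heq using fun x => hs x
  obtain ⟨t, ht⟩ := hc.elim_finite_subcover (fun x : G1 => (e x).source)
    (fun x => (e x).open_source) (fun y _ => mem_iUnion.mpr ⟨y, hmem y⟩)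
  have hsub : s ⁻¹' {v} ⊆ ⋃ x ∈ t, (s ⁻¹' {v} ∩ (e x).source) := by
    intro y hy
    obtain ⟨x, hxt, hyx⟩ := mem_iUnion₂.mp (ht hy)
    exact mem_iUnion₂.mpr ⟨x, hxt, hy, hyx⟩
  refine Set.Finite.subset (Set.Finite.biUnion t.finite_toSet fun x _ => ?_) hsub
  refine Set.Subsingleton.finite fun a ha b hb => ?_
  refine (e x).injOn ha.2 hb.2 ?_
  have : s a = s b := by rw [ha.1, hb.1]
  rwa [heq x] at this

/-- The fiber cardinality of a local homeomorphism from a compact Hausdorff space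
is locally constant. -/
lemma aux_fiber_locally_const {G0 G1 : Type*} [TopologicalSpace G0] [TopologicalSpace G1]
    [CompactSpace G1] [T2Space G0] [T2Space G1]
    {s : G1 → G0} (hs : IsLocalHomeomorph s) (v : G0) :
    ∃ W : Set G0, IsOpen W ∧ v ∈ W ∧
      ∀ w ∈ W, (s ⁻¹' {w}).ncard = (s ⁻¹' {v}).ncard := by
  classical
  set F := s ⁻¹' {v} with hFdef
  have hFfin : F.Finite := aux_fiber_finite hs v
  choose e hmem heq using fun x => hs x
  obtain ⟨V, hV, hVdisj⟩ := hFfin.t2_separation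
  set U : G1 → Set G1 := fun x => V x ∩ (e x).source with hUdef
  have hUopen : ∀ x, IsOpen (U x) := fun x => (hV x).2.inter (e x).open_source
  have hxU : ∀ x, x ∈ U x := fun x => ⟨(hV x).1, hmem x⟩
  have hinj : ∀ x, Set.InjOn s (U x) := by
    intro x a ha b hb hab
    refine (e x).injOn ha.2 hb.2 ?_
    rwa [heq x] at hab
  set K : Set G1 := (⋃ x ∈ F, U x)ᶜ with hKdef
  have hKcomp : IsCompact K :=
    (isOpen_biUnion fun x _ => hUopen x).isClosed_compl.isCompact
  have hsKclosed : IsClosed (s '' K) := (hKcomp.image hs.continuous).isClosed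
  refine ⟨(⋂ x ∈ F, s '' U x) ∩ (s '' K)ᶜ, ?_, ?_, ?_⟩
  · exact (hFfin.isOpen_biInter fun x _ => hs.isOpenMap _ (hUopen x)).inter
      hsKclosed.isOpen_compl
  · constructor
    · exact mem_iInter₂.mpr fun x hx => ⟨x, hxU x, hx⟩
    · rintro ⟨z, hzK, hzv⟩
      exact hzK (mem_iUnion₂.mpr ⟨z, hzv, hxU z⟩)
  · rintro w ⟨hw1, hw2⟩
    have hex : ∀ x ∈ F, ∃ y, y ∈ U x ∧ s y = w := by
      intro x hx
      obtain ⟨y, hy, hyw⟩ := mem_iInter₂.mp hw1 x hx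
      exact ⟨y, hy, hyw⟩
    choose! g hgU hgs using hex
    have himg : s ⁻¹' {w} = g '' F := by
      ext z
      constructor
      · intro hz
        have hzK : z ∉ K := fun hzK => hw2 ⟨z, hzK, hz⟩
        obtain ⟨x, hxF, hzU⟩ := mem_iUnion₂.mp (not_not.mp fun h => hzK h)
        refine ⟨x, hxF, hinj x (hgU x hxF) hzU (by rw [hgs x hxF, hz])⟩
      · rintro ⟨x, hxF, rfl⟩
        exact hgs x hxF
    have hginj : Set.InjOn g F := by
      intro x hx y hy hxy
      by_contra hne
      have hd := hVdisj hx hy hne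
      exact (Set.disjoint_left.mp hd ((hgU x hx).1) (hxy ▸ (hgU y hy).1))
    rw [himg, Set.ncard_image_of_injOn hginj]

/-- Level sets of the fiber cardinality are clopen. -/
lemma aux_level_clopen {G0 G1 : Type*} [TopologicalSpace G0] [TopologicalSpace G1]
    [CompactSpace G1] [T2Space G0] [T2Space G1]
    {s : G1 → G0} (hs : IsLocalHomeomorph s) (n : ℕ) :
    IsClopen {v : G0 | (s ⁻¹' {v}).ncard = n} := by
  constructor
  · rw [← isOpen_compl_iff, isOpen_iff_mem_nhds]
    intro v hv
    obtain ⟨W, hWopen, hvW, hW⟩ := aux_fiber_locally_const hs v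
    exact mem_nhds_iff.mpr ⟨W, fun w hw h => hv (by simpa [hW w hw] using h), hWopen, hvW⟩
  · rw [isOpen_iff_mem_nhds]
    intro v hv
    obtain ⟨W, hWopen, hvW, hW⟩ := aux_fiber_locally_const hs v
    exact mem_nhds_iff.mpr ⟨W, fun w hw => by simpa [hW w hw] using hv, hWopen, hvW⟩

/- STATEMENT 7: With G⁰, G¹ compact Hausdorff and r, s : G¹ → G⁰ local homeomorphisms,
for m, n ∈ ℕ the set G¹_{m,n} = {e ∈ G¹ : |r⁻¹(r(e))| = m and |s⁻¹(s(e))| = n} is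
compact open, and its images s(G¹_{m,n}) and r(G¹_{m,n}) are compact open in G⁰. -/
theorem statement7
    {G0 G1 : Type*} [TopologicalSpace G0] [TopologicalSpace G1]
    [CompactSpace G0] [CompactSpace G1] [T2Space G0] [T2Space G1]
    (r s : G1 → G0)
    (hr : IsLocalHomeomorph r) (hs : IsLocalHomeomorph s) :
    ∀ m n : ℕ,
      let Gmn : Set G1 :=
        {e : G1 | (r ⁻¹' {r e}).ncard = m ∧ (s ⁻¹' {s e}).ncard = n}
      (IsCompact Gmn ∧ IsOpen Gmn) ∧
      (IsCompact (s '' Gmn) ∧ IsOpen (s '' Gmn)) ∧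
      (IsCompact (r '' Gmn) ∧ IsOpen (r '' Gmn)) := by
  intro m n Gmn
  have hRm := aux_level_clopen hr m
  have hSn := aux_level_clopen hs n
  have hGeq : Gmn = r ⁻¹' {v : G0 | (r ⁻¹' {v}).ncard = m} ∩
      s ⁻¹' {v : G0 | (s ⁻¹' {v}).ncard = n} := rfl
  have hopen : IsOpen Gmn := by
    rw [hGeq]
    exact (hRm.2.preimage hr.continuous).inter (hSn.2.preimage hs.continuous)
  have hclosed : IsClosed Gmn := by
    rw [hGeq]
    exact (hRm.1.preimage hr.continuous).inter (hSn.1.preimage hs.continuous)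
  have hcomp : IsCompact Gmn := hclosed.isCompact
  exact ⟨⟨hcomp, hopen⟩,
    ⟨hcomp.image hs.continuous, hs.isOpenMap _ hopen⟩,
    ⟨hcomp.image hr.continuous, hr.isOpenMap _ hopen⟩⟩
end

section
/- Let G^1 be compact, s : G^1 → G^0 a local homeomorphism, and let {f_U : U ∈ 𝒰} be a finite partition of unity subordinate to an open cover 𝒰 such that s restricted to each U ∈ 𝒰 is injective. Set h_U = √f_U. Then the h_U form a frame for the right inner product on C(G^1) given by ⟨x|y⟩(v) = Σ_{s(g)=v} conj(x(g)) y(g): for all g ∈ C(G^1) and e ∈ G^1, Σ_U h_U(e) ⟨h_U|g⟩(s(e)) = g(e). -/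
/- STATEMENT 8: Let G¹ be compact, s : G¹ → G⁰ a local homeomorphism (with finite
fibers), and {f_U} a finite partition of unity subordinate to an open cover 𝒰 on each
member of which s is injective.  With h_U = √f_U, the h_U form a frame for the right
inner product ⟨x|y⟩(v) = Σ_{s(g)=v} conj(x(g))y(g) on C(G¹):
for all g ∈ C(G¹) and e ∈ G¹,  Σ_U h_U(e)·⟨h_U|g⟩(s(e)) = g(e). -/
theorem statement8
    {G0 G1 : Type*} [TopologicalSpace G0] [TopologicalSpace G1]
    [CompactSpace G1] [T2Space G1]
    (s : G1 → G0) (hs : IsLocalHomeomorph s)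
    (hfib : ∀ v : G0, (s ⁻¹' {v}).Finite)
    {ι : Type*} [Fintype ι] (U : ι → Set G1)
    (hUopen : ∀ i, IsOpen (U i))
    (hUinj : ∀ i, Set.InjOn s (U i))
    (f : ι → G1 → ℝ)
    (hf_cont : ∀ i, Continuous (f i))
    (hf_nonneg : ∀ i x, 0 ≤ f i x)
    (hf_le_one : ∀ i x, f i x ≤ 1)
    (hf_supp : ∀ i, {x : G1 | f i x ≠ 0} ⊆ U i)
    (hf_sum : ∀ x : G1, ∑ i, f i x = 1) :
    ∀ (g : G1 → ℂ) (hg : Continuous g) (e : G1),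
      ∑ i, (Real.sqrt (f i e) : ℂ) *
        (∑ᶠ e' ∈ s ⁻¹' {s e}, (starRingEnd ℂ) (Real.sqrt (f i e') : ℂ) * g e')
      = g e := by
  intro g hg e
  classical
  have hfin : (s ⁻¹' {s e}).Finite := hfib (s e)
  have hF : ∀ i, (∑ᶠ e' ∈ s ⁻¹' {s e}, (starRingEnd ℂ) (Real.sqrt (f i e') : ℂ) * g e')
      = ∑ e' ∈ hfin.toFinset, (starRingEnd ℂ) (Real.sqrt (f i e') : ℂ) * g e' := by
    intro i
    exact finsum_mem_eq_finite_toFinset_sum (fun e' => (starRingEnd ℂ) (Real.sqrt (f i e') : ℂ) * g e') hfin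
  simp only [hF, Finset.mul_sum]
  rw [Finset.sum_comm]
  have he : e ∈ hfin.toFinset := by simp
  rw [Finset.sum_eq_single e]
  · have key : ∀ i, (Real.sqrt (f i e) : ℂ) * ((starRingEnd ℂ) (Real.sqrt (f i e) : ℂ) * g e)
        = ((f i e : ℝ) : ℂ) * g e := by
      intro i
      rw [Complex.conj_ofReal, ← mul_assoc, ← Complex.ofReal_mul,
        Real.mul_self_sqrt (hf_nonneg i e)]
    simp only [key, ← Finset.sum_mul, ← Complex.ofReal_sum, hf_sum e,
      Complex.ofReal_one, one_mul]
  · intro e' he' hne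
    apply Finset.sum_eq_zero
    intro i _
    have hse : s e' = s e := by simpa using (hfin.mem_toFinset.mp he')
    by_cases h1 : f i e = 0
    · simp [h1]
    by_cases h2 : f i e' = 0
    · simp [h2]
    · exact absurd (hUinj i (hf_supp i h2) (hf_supp i h1) hse) hne
  · intro h; exact absurd he h
end

section
/- In the setting of the previous statement, with r : G^1 → G^0 also a local homeomorphism and left inner product _A⟨x|y⟩(v) = Σ_{r(g)=v} x(g) conj(y(g)), the trace of the identity satisfies Φ(Id)(v) = Σ_U _A⟨h_U|h_U⟩(v) = |r^{-1}(v)| for every v ∈ G^0. -/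
/- STATEMENT 9: In the setting of Statement 8, with r : G¹ → G⁰ also a local
homeomorphism and left inner product _A⟨x|y⟩(v) = Σ_{r(g)=v} x(g)conj(y(g)), the trace
of the identity satisfies Φ(Id)(v) = Σ_U _A⟨h_U|h_U⟩(v) = |r⁻¹(v)| for every v ∈ G⁰,
where h_U = √f_U. -/
theorem statement9
    {G0 G1 : Type*} [TopologicalSpace G0] [TopologicalSpace G1]
    [CompactSpace G0] [CompactSpace G1] [T2Space G0] [T2Space G1]
    (r s : G1 → G0) (hr : IsLocalHomeomorph r) (hs : IsLocalHomeomorph s)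
    (hrfib : ∀ v : G0, (r ⁻¹' {v}).Finite)
    {ι : Type*} [Fintype ι] (U : ι → Set G1)
    (hUopen : ∀ i, IsOpen (U i))
    (hUinj_s : ∀ i, Set.InjOn s (U i))
    (hUinj_r : ∀ i, Set.InjOn r (U i))
    (f : ι → G1 → ℝ)
    (hf_cont : ∀ i, Continuous (f i))
    (hf_nonneg : ∀ i x, 0 ≤ f i x)
    (hf_le_one : ∀ i x, f i x ≤ 1)
    (hf_supp : ∀ i, {x : G1 | f i x ≠ 0} ⊆ U i)
    (hf_sum : ∀ x : G1, ∑ i, f i x = 1) :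
    ∀ v : G0,
      ∑ i, (∑ᶠ e ∈ r ⁻¹' {v}, Real.sqrt (f i e) * Real.sqrt (f i e))
        = ((r ⁻¹' {v}).ncard : ℝ) := by
  intro v
  have hfin := hrfib v
  have h1 : ∀ i, (∑ᶠ e ∈ r ⁻¹' {v}, Real.sqrt (f i e) * Real.sqrt (f i e))
      = ∑ e ∈ hfin.toFinset, f i e := by
    intro i
    rw [finsum_mem_eq_finite_toFinset_sum _ hfin]
    exact Finset.sum_congr rfl fun e _ => Real.mul_self_sqrt (hf_nonneg i e)
  simp only [h1]
  rw [Finset.sum_comm]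
  simp [hf_sum, Set.ncard_eq_toFinset_card _ hfin]
end

section
/- Let E be a finitely generated bi-Hilbertian A-bimodule. For 0 ≤ T ∈ 𝒯_E (the Toeplitz algebra acting on the Fock module) one has Φ_k(T) e^{-β_k} ≤ ‖T‖·1_A for every k, and hence for complex s with Re(s) > 1 the series Σ_{k≥0} Φ_k(T) e^{-β_k} (1+k²)^{-s/2} converges in norm to an element Φ_∞^s(T) of A, which is positive when s is real. -/
/-!
Since `T ≤ ‖T‖ • 1` in the C⋆-algebra `𝒯`, positivity of `Φ k` and of the central element
`eβinv k` gives `Φ k T * eβinv k ≤ ‖T‖ • (Φ k 1 * eβinv k) = ‖T‖ • 1`. The terms of the series are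
therefore positive and uniformly bounded in norm, while
`‖(1 + k²) ^ (-s / 2)‖ = (1 + k²) ^ (-Re s / 2)` is summable for `Re s > 1`.
-/

open Complex

section StarOrderedRing

variable {B : Type*} [Ring B] [StarRing B] [PartialOrder B] [StarOrderedRing B]

theorem eq_one_of_nonneg_of_mul_self_eq_one [IsAddTorsionFree B] {q : B} (hq : 0 ≤ q)
    (hq2 : q * q = 1) : q = 1 := by
  set d := 1 - q
  have hd : IsSelfAdjoint d := .sub (.one B) (.of_nonneg hq)
  have hdd : d * d = d + d := by
    simp only [d, sub_mul, mul_sub, one_mul, mul_one, hq2]; abel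
  have hqd : q * d = -d := by simp only [d, mul_sub, mul_one, hq2, neg_sub]
  have hdq : d * q = q * d := by simp only [d, sub_mul, mul_sub, one_mul, mul_one]
  have h₁ : 0 ≤ d + d := by simpa [hd.star_eq, hdd] using star_mul_self_nonneg d
  have h₂ : 0 ≤ -(d + d) := by
    simpa [hd.star_eq, hdq, mul_assoc, hdd, hqd] using star_left_conjugate_nonneg hq d
  have h₃ : 2 • d = 0 := by rw [two_nsmul]; exact le_antisymm (neg_nonneg.mp h₂) h₁
  exact (sub_eq_zero.mp ((smul_eq_zero.mp h₃).resolve_left two_ne_zero)).symm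

-- `u * star u` is a positive square root of `1`, hence equal to `1`.
theorem star_eq_neg_of_mul_self_eq_neg_one [IsAddTorsionFree B] {u : B}
    (hu : Commute u (star u)) (hu2 : u * u = -1) : star u = -u := by
  have hq : u * star u = 1 := by
    refine eq_one_of_nonneg_of_mul_self_eq_one ?_ ?_
    · simpa only [star_star] using star_mul_self_nonneg (star u)
    calc u * star u * (u * star u) = u * u * star (u * u) := by
          rw [star_mul, hu.symm.mul_mul_mul_comm]
      _ = 1 := by rw [hu2, star_neg, star_one, neg_one_mul, neg_neg]
  calc star u = -(u * u) * star u := by rw [hu2, neg_neg, one_mul]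
    _ = -u := by rw [neg_mul, mul_assoc, hq, mul_one]

end StarOrderedRing

section NormedStarRing

variable {B : Type*} [NormedRing B] [StarRing B] [NormedStarGroup B] [NormedAlgebra ℂ B]

theorem star_real_smul (r : ℝ) (a : B) : star (r • a) = r • star a :=
  map_real_smul (starAddEquiv : B ≃+ B) continuous_star r a

-- Positivity forces `star (I • 1) = -(I • 1)`, which makes `star` conjugate-linear.
theorem starModule_complex_of_starOrderedRing [PartialOrder B] [StarOrderedRing B] :
    StarModule ℂ B where
  star_smul z a := by
    have : IsAddTorsionFree B := .of_isTorsionFree ℂ B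
    have hI : star (algebraMap ℂ B I) = -algebraMap ℂ B I :=
      star_eq_neg_of_mul_self_eq_neg_one (Algebra.commute_algebraMap_left _ _)
        (by rw [← map_mul, I_mul_I, map_neg, map_one])
    have hIa : star (I • a) = -(I • star a) := by
      rw [Algebra.smul_def, star_mul, hI, mul_neg, ← Algebra.commutes, Algebra.smul_def]
    have hz : star z = z.re - z.im * I := by apply Complex.ext <;> simp
    conv_lhs => rw [← re_add_im z]
    rw [hz, add_smul, sub_smul, mul_smul, mul_smul, star_add, coe_smul, coe_smul, coe_smul,
      coe_smul, star_real_smul, star_real_smul, hIa, smul_neg, sub_eq_add_neg]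

end NormedStarRing

theorem map_le_norm_smul_map_one {𝒯 A : Type*} [CStarAlgebra 𝒯] [PartialOrder 𝒯]
    [StarOrderedRing 𝒯] [AddCommGroup A] [PartialOrder A] [IsOrderedAddMonoid A] [Module ℂ A]
    (ψ : 𝒯 →ₗ[ℂ] A) (hψ : ∀ T, 0 ≤ T → 0 ≤ ψ T) {T : 𝒯} (hT : IsSelfAdjoint T) :
    ψ T ≤ ‖T‖ • ψ 1 := by
  have h := hψ _ (sub_nonneg.mpr hT.le_algebraMap_norm_self)
  rwa [Algebra.algebraMap_eq_smul_one, map_sub, LinearMap.map_smul_of_tower, sub_nonneg] at h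

theorem summable_one_add_sq_rpow_neg {σ : ℝ} (hσ : 1 < σ) :
    Summable fun k : ℕ => (1 + (k : ℝ) ^ 2) ^ (-σ / 2) := by
  refine (Real.summable_nat_rpow.mpr (neg_lt_neg hσ)).of_norm_bounded_eventually_nat ?_
  filter_upwards [Filter.eventually_ge_atTop 1] with k hk
  have hk : (0 : ℝ) < (k : ℝ) ^ 2 := by positivity
  rw [Real.norm_of_nonneg (by positivity)]
  calc (1 + (k : ℝ) ^ 2) ^ (-σ / 2) ≤ ((k : ℝ) ^ 2) ^ (-σ / 2) :=
        Real.rpow_le_rpow_of_nonpos hk (by linarith) (by linarith)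
    _ = (k : ℝ) ^ (-σ) := by
        rw [← Real.rpow_natCast, ← Real.rpow_mul (Nat.cast_nonneg k)]; ring_nf

theorem one_add_sq_cpow_eq_ofReal (k : ℕ) (s : ℂ) :
    (1 + (k : ℂ) ^ 2) ^ s = (1 + (k : ℝ) ^ 2 : ℝ) ^ s := by
  push_cast; rfl

theorem norm_one_add_sq_cpow (k : ℕ) (s : ℂ) :
    ‖(1 + (k : ℂ) ^ 2) ^ (-s / 2)‖ = (1 + (k : ℝ) ^ 2) ^ (-s.re / 2) := by
  rw [one_add_sq_cpow_eq_ofReal, norm_cpow_eq_rpow_re_of_pos (by positivity)]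
  simp [neg_div]

open scoped ComplexOrder in
theorem one_add_sq_cpow_nonneg (k : ℕ) {s : ℂ} (hs : s.im = 0) :
    0 ≤ (1 + (k : ℂ) ^ 2) ^ (-s / 2) := by
  have hs' : -s / 2 = ((-s.re / 2 : ℝ) : ℂ) := by apply Complex.ext <;> simp [hs]
  rw [hs', one_add_sq_cpow_eq_ofReal, ← ofReal_cpow (by positivity)]
  exact zero_le_real.mpr (by positivity)

theorem summable_one_add_sq_cpow_smul {E : Type*} [NormedAddCommGroup E] [NormedSpace ℂ E]
    [CompleteSpace E] {f : ℕ → E} {C : ℝ} (hf : ∀ k, ‖f k‖ ≤ C) {s : ℂ} (hs : 1 < s.re) :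
    Summable fun k : ℕ => (1 + (k : ℂ) ^ 2) ^ (-s / 2) • f k := by
  refine ((summable_one_add_sq_rpow_neg hs).mul_right C).of_norm_bounded fun k => ?_
  rw [norm_smul, norm_one_add_sq_cpow]
  exact mul_le_mul_of_nonneg_left (hf k) (by positivity)

theorem statement12_general
    {A 𝒯 : Type*}
    [NormedRing A] [StarRing A] [CStarRing A] [NormedAlgebra ℂ A] [CompleteSpace A]
    [PartialOrder A] [StarOrderedRing A]
    [NormedRing 𝒯] [StarRing 𝒯] [CStarRing 𝒯] [NormedAlgebra ℂ 𝒯] [CompleteSpace 𝒯]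
    [PartialOrder 𝒯] [StarOrderedRing 𝒯]
    (Φ : ℕ → 𝒯 →ₗ[ℂ] A)                 -- the maps Φ_k on the Toeplitz algebra
    (hΦ_pos : ∀ k, ∀ T : 𝒯, 0 ≤ T → 0 ≤ Φ k T)
    (eβinv : ℕ → A)                      -- the elements e^{-β_k}
    (heβinv_pos : ∀ k, 0 ≤ eβinv k)
    (heβinv_central : ∀ k (a : A), a * eβinv k = eβinv k * a)
    (hnorm : ∀ k, Φ k 1 * eβinv k = 1) : -- Φ_k(Id_{E^{⊗k}})e^{-β_k} = 1_A
    ∀ T : 𝒯, 0 ≤ T →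
      (∀ k, Φ k T * eβinv k ≤ ‖T‖ • (1 : A)) ∧
      (∀ s : ℂ, 1 < s.re →
        ∃ ΦsT : A,
          HasSum (fun k : ℕ => ((1 + (k : ℂ) ^ 2) ^ (-s / 2)) • (Φ k T * eβinv k)) ΦsT ∧
          (s.im = 0 → 0 ≤ ΦsT)) := by
  have := starModule_complex_of_starOrderedRing (B := A)
  have := starModule_complex_of_starOrderedRing (B := 𝒯)
  let _ : CStarAlgebra A := {}
  let _ : CStarAlgebra 𝒯 := {}
  have hterm_nonneg (k : ℕ) (T : 𝒯) (hT : 0 ≤ T) : 0 ≤ Φ k T * eβinv k :=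
    Commute.mul_nonneg (hΦ_pos k T hT) (heβinv_pos k) (heβinv_central k _)
  intro T hT
  have hle (k : ℕ) : Φ k T * eβinv k ≤ ‖T‖ • (1 : A) := by
    simpa [hnorm k] using map_le_norm_smul_map_one (LinearMap.mulRight ℂ (eβinv k) ∘ₗ Φ k)
      (hterm_nonneg k) (IsSelfAdjoint.of_nonneg hT)
  have hbound (k : ℕ) : ‖Φ k T * eβinv k‖ ≤ ‖‖T‖ • (1 : A)‖ :=
    CStarAlgebra.norm_le_norm_of_nonneg_of_le (hterm_nonneg k T hT) (hle k)
  refine ⟨hle, fun s hs => ⟨_, (summable_one_add_sq_cpow_smul hbound hs).hasSum, fun him => ?_⟩⟩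
  open scoped ComplexOrder in
  exact tsum_nonneg fun k => smul_nonneg (one_add_sq_cpow_nonneg k him) (hterm_nonneg k T hT)

theorem statement12
    {A 𝒯 : Type*}
    [NormedRing A] [StarRing A] [CStarRing A] [NormedAlgebra ℂ A] [CompleteSpace A]
    [NormOneClass A] [PartialOrder A] [StarOrderedRing A]
    [NormedRing 𝒯] [StarRing 𝒯] [CStarRing 𝒯] [NormedAlgebra ℂ 𝒯] [CompleteSpace 𝒯]
    [NormOneClass 𝒯] [PartialOrder 𝒯] [StarOrderedRing 𝒯]
    (Φ : ℕ → 𝒯 →ₗ[ℂ] A)                 -- the maps Φ_k on the Toeplitz algebra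
    (hΦ_pos : ∀ k, ∀ T : 𝒯, 0 ≤ T → 0 ≤ Φ k T)
    (eβinv : ℕ → A)                      -- the elements e^{-β_k}
    (heβinv_pos : ∀ k, 0 ≤ eβinv k)
    (heβinv_central : ∀ k (a : A), a * eβinv k = eβinv k * a)
    (hnorm : ∀ k, Φ k 1 * eβinv k = 1) : -- Φ_k(Id_{E^{⊗k}})e^{-β_k} = 1_A
    ∀ T : 𝒯, 0 ≤ T →
      (∀ k, Φ k T * eβinv k ≤ ‖T‖ • (1 : A)) ∧
      (∀ s : ℂ, 1 < s.re →
        ∃ ΦsT : A,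
          HasSum (fun k : ℕ => ((1 + (k : ℂ) ^ 2) ^ (-s / 2)) • (Φ k T * eβinv k)) ΦsT ∧
          (s.im = 0 → 0 ≤ ΦsT)) :=
  statement12_general Φ hΦ_pos eβinv heβinv_pos heβinv_central hnorm
end

section
/- Let E be a bi-Hilbertian bimodule over a unital C*-algebra A such that the right inner product is full. If a state φ : A → ℂ is E-invariant, i.e. φ(⟨e₁|e₂⟩_A) = φ(_A⟨e₂|e₁⟩) for all e₁, e₂ ∈ E, then φ is a trace: φ(ab) = φ(ba) for all a, b ∈ A. -/
/- STATEMENT 17: Let E be a bi-Hilbertian bimodule over a unital C*-algebra A with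
full right inner product.  If a state φ : A → ℂ is E-invariant, i.e.
φ(⟨e₁|e₂⟩_A) = φ(_A⟨e₂|e₁⟩) for all e₁, e₂ ∈ E, then φ is a trace:
φ(ab) = φ(ba) for all a, b ∈ A. -/
theorem statement17
    {A E : Type*}
    [NormedRing A] [StarRing A] [CStarRing A] [NormedAlgebra ℂ A] [CompleteSpace A]
    [NormOneClass A] [PartialOrder A] [StarOrderedRing A]
    [AddCommGroup E] [Module ℂ E]
    (rip lip : E → E → A)        -- right and left A-valued inner products
    (rsmul : E → A → E)          -- right action of A on E
    -- bimodule / inner product axioms used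
    (hrip_linear : ∀ e f (a : A), rip e (rsmul f a) = rip e f * a)
    (hrip_conj : ∀ e f (a : A), rip (rsmul e a) f = star a * rip e f)
    (hlip_adj : ∀ e f (a : A), lip (rsmul e a) f = lip e (rsmul f (star a)))
    -- the right inner product is full
    (hfull :
      (Submodule.span ℂ (Set.range fun p : E × E => rip p.1 p.2)).topologicalClosure = ⊤)
    -- φ is a state on A
    (φ : A →L[ℂ] ℂ) (hφ_one : φ 1 = 1) (hφ_pos : ∀ a : A, 0 ≤ a → 0 ≤ (φ a).re ∧ (φ a).im = 0)
    -- φ is E-invariant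
    (hinv : ∀ e₁ e₂ : E, φ (rip e₁ e₂) = φ (lip e₂ e₁)) :
    ∀ a b : A, φ (a * b) = φ (b * a) := by
  intro a b
  -- the functional x ↦ φ(x*a) - φ(a*x)
  set F : A →L[ℂ] ℂ :=
    φ.comp ((ContinuousLinearMap.mul ℂ A).flip a - ContinuousLinearMap.mul ℂ A a) with hF
  have hFx : ∀ x : A, F x = φ (x * a) - φ (a * x) := by
    intro x
    simp [hF]
  -- F vanishes on the range of rip
  have hker : Submodule.span ℂ (Set.range fun p : E × E => rip p.1 p.2) ≤
      LinearMap.ker (F : A →ₗ[ℂ] ℂ) := by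
    rw [Submodule.span_le]
    rintro _ ⟨⟨e, f⟩, rfl⟩
    simp only [SetLike.mem_coe, LinearMap.mem_ker, ContinuousLinearMap.coe_coe]
    rw [hFx]
    have h1 : φ (rip e f * a) = φ (a * rip e f) := by
      rw [← hrip_linear, hinv, hlip_adj, ← hinv, hrip_conj, star_star]
    rw [h1, sub_self]
  have hclosed : IsClosed (LinearMap.ker (F : A →ₗ[ℂ] ℂ) : Set A) := ContinuousLinearMap.isClosed_ker F
  have htop : (⊤ : Submodule ℂ A) ≤ LinearMap.ker (F : A →ₗ[ℂ] ℂ) := by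
    rw [← hfull]
    exact Submodule.topologicalClosure_minimal _ hker hclosed
  have hb : F b = 0 := htop (Submodule.mem_top)
  rw [hFx] at hb
  exact (sub_eq_zero.mp hb).symm
end
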